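/- Suppose the induced endogenous distribution Q is strictly positive. Then for every e ∈ E and every assignment v ∈ Π_{j∈W_e} X_j one has Σ_{u∈U_e} q_e(u) · Π_{k=1}^{m_e} 1[f_{i_k}(u)(v↾pa(i_k)) = v_{i_k}] = Π_{k=1}^{m_e} Q(x_{i_k} = v_{i_k} ∣ T_k^e = v↾T_k^e), where T_k^e := {i_1,…,i_{k−1}} ∪ pa(i_1) ∪ … ∪ pa(i_k). (The mixture over an exogenous variable of the product of its children's structural-equation CPTs equals the chain-rule product of conditionals of the induced endogenous distribution.) -/

import Mathlib

open Finset
open scoped Classical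

variable {n : ℕ}

/-- Restriction of a joint endogenous configuration `x` to the coordinates in `S`. -/
def restr {X : Fin n → Type} (S : Finset (Fin n)) (x : ∀ i, X i) : ∀ j : S, X j :=
  fun j => x j

/-- Marginal of `R` over the coordinates in `S`. -/
noncomputable def marg {X : Fin n → Type} [∀ i, Fintype (X i)]
    (R : (∀ i, X i) → ℝ) (S : Finset (Fin n)) (v : ∀ j : S, X j) : ℝ :=
  ∑ x : ∀ i, X i, if restr S x = v then R x else 0

/-- Conditional probability `R(x_i = a | S = v)`. -/
noncomputable def cpr {X : Fin n → Type} [∀ i, Fintype (X i)]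
    (R : (∀ i, X i) → ℝ) (i : Fin n) (S : Finset (Fin n)) (a : X i) (v : ∀ j : S, X j) : ℝ :=
  (∑ x : ∀ i, X i, if x i = a ∧ restr S x = v then R x else 0) / marg R S v

/-- Restriction along an inclusion of index sets. -/
def restr2 {X : Fin n → Type} {S T : Finset (Fin n)} (h : S ⊆ T) (v : ∀ j : T, X j) :
    ∀ j : S, X j :=
  fun j => v ⟨j, h j.2⟩

/-- The endogenous children of the exogenous variable `e`. -/
noncomputable def childSet {E : Type} [Fintype E] (c : Fin n → E) (e : E) : Finset (Fin n) :=
  univ.filter (fun i => c i = e)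

/-- Enumeration `i_1 < … < i_{m_e}` of the children of `e` in increasing order. -/
noncomputable def ch {E : Type} [Fintype E] (c : Fin n → E) (e : E) :
    Fin (childSet c e).card → Fin n :=
  fun k => (childSet c e).orderEmbOfFin rfl k

lemma ch_mem_childSet {E : Type} [Fintype E] (c : Fin n → E) (e : E)
    (k : Fin (childSet c e).card) : ch c e k ∈ childSet c e :=
  Finset.orderEmbOfFin_mem _ rfl k

lemma c_ch {E : Type} [Fintype E] (c : Fin n → E) (e : E)
    (k : Fin (childSet c e).card) : c (ch c e k) = e := by
  have h := ch_mem_childSet c e k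
  simpa [childSet] using h

/-- Cast of a state of `U e` to a state of the exogenous parent of the `k`-th child of `e`. -/
noncomputable def uCast {E : Type} [Fintype E] (U : E → Type) (c : Fin n → E) (e : E)
    (k : Fin (childSet c e).card) (u : U e) : U (c (ch c e k)) :=
  cast (congrArg U (c_ch c e k).symm) u

/-- `W_e := {i_1,…,i_{m_e}} ∪ pa(i_1) ∪ … ∪ pa(i_{m_e})`. -/
noncomputable def Wset {E : Type} [Fintype E] (pa : Fin n → Finset (Fin n))
    (c : Fin n → E) (e : E) : Finset (Fin n) :=
  childSet c e ∪ (childSet c e).biUnion pa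

/-- `T_k^e := {i_1,…,i_{k−1}} ∪ pa(i_1) ∪ … ∪ pa(i_k)` (indices `k` are 0-based here). -/
noncomputable def Tset {E : Type} [Fintype E] (pa : Fin n → Finset (Fin n))
    (c : Fin n → E) (e : E) (k : Fin (childSet c e).card) : Finset (Fin n) :=
  ((univ.filter (fun l => l < k)).image (ch c e)) ∪
    ((univ.filter (fun l => l ≤ k)).biUnion (fun l => pa (ch c e l)))

lemma ch_mem_W {E : Type} [Fintype E] (pa : Fin n → Finset (Fin n)) (c : Fin n → E)
    (e : E) (k : Fin (childSet c e).card) : ch c e k ∈ Wset pa c e :=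
  Finset.mem_union_left _ (ch_mem_childSet c e k)

lemma pa_subset_W {E : Type} [Fintype E] (pa : Fin n → Finset (Fin n)) (c : Fin n → E)
    (e : E) (k : Fin (childSet c e).card) : pa (ch c e k) ⊆ Wset pa c e :=
  fun j hj => Finset.mem_union_right _
    (Finset.mem_biUnion.2 ⟨ch c e k, ch_mem_childSet c e k, hj⟩)

lemma T_subset_W {E : Type} [Fintype E] (pa : Fin n → Finset (Fin n)) (c : Fin n → E)
    (e : E) (k : Fin (childSet c e).card) : Tset pa c e k ⊆ Wset pa c e := by
  intro j hj
  rcases Finset.mem_union.1 hj with h | h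
  · rcases Finset.mem_image.1 h with ⟨l, _, rfl⟩
    exact ch_mem_W pa c e l
  · rcases Finset.mem_biUnion.1 h with ⟨l, _, hl⟩
    exact pa_subset_W pa c e l hl

/-- Full joint `J(x,u)` of a quasi-Markovian PSCM. -/
noncomputable def Jfun {E : Type} [Fintype E] {X : Fin n → Type} {U : E → Type}
    [∀ i, Fintype (X i)]
    (pa : Fin n → Finset (Fin n)) (c : Fin n → E)
    (f : ∀ i, U (c i) → (∀ j : pa i, X j) → X i)
    (q : ∀ e, U e → ℝ) (x : ∀ i, X i) (u : ∀ e, U e) : ℝ :=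
  (∏ e, q e (u e)) *
    ∏ i, (if f i (u (c i)) (restr (pa i) x) = x i then (1 : ℝ) else 0)

/-- Induced endogenous distribution `Q(x) := Σ_u J(x,u)`. -/
noncomputable def Qfun {E : Type} [Fintype E] {X : Fin n → Type} {U : E → Type}
    [∀ i, Fintype (X i)] [∀ e, Fintype (U e)]
    (pa : Fin n → Finset (Fin n)) (c : Fin n → E)
    (f : ∀ i, U (c i) → (∀ j : pa i, X j) → X i)
    (q : ∀ e, U e → ℝ) (x : ∀ i, X i) : ℝ :=
  ∑ u : ∀ e, U e, Jfun pa c f q x u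

/-!
The exogenous variables are independent, so on a prefix `{0, …, m - 1}` of the topological order
the marginal of `Q` factorises as a product over `e` of the mixtures
`Σ_u q_e(u) · Π_{i < m, c i = e} 1[f_i(u)(x↾pa(i)) = x_i]`. Between the prefixes ending just
before and just after the `k`-th child `i_k` of `e` only the factor of `e` changes, from `P_k` to
`P_{k+1}`, the mixtures over the first `k` and `k + 1` children of `e`. Both depend only on the
coordinates in `T_k ∪ {i_k}`, so summing out the other coordinates gives
`Q(T_k ∪ {i_k}) · P_k = P_{k+1} · Q(T_k)`: the `k`-th conditional is `P_{k+1} / P_k`, and the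
chain-rule product telescopes to `P_{m_e} / P_0 = P_{m_e}`, the left-hand side.
-/

lemma restr_surjective {X : Fin n → Type} [∀ i, Nonempty (X i)] (S : Finset (Fin n)) :
    Function.Surjective (restr (X := X) S) := fun v =>
  ⟨fun i => if h : i ∈ S then v ⟨i, h⟩ else Classical.arbitrary _,
    funext fun j => dif_pos j.2⟩

lemma mul_prod_range_div_eq {G : Type*} [CommGroupWithZero G] (f : ℕ → G) (N : ℕ)
    (hf : ∀ i < N, f i ≠ 0) : f 0 * ∏ i ∈ Finset.range N, f (i + 1) / f i = f N := by
  induction N with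
  | zero => simp
  | succ N ih =>
    rw [Finset.prod_range_succ, ← mul_assoc, ih fun i hi => hf i (by omega),
      mul_div_cancel₀ _ (hf N N.lt_succ_self)]

section Marginal

variable {X : Fin n → Type} [∀ i, Fintype (X i)]

lemma marg_restr (R : (∀ i, X i) → ℝ) (S : Finset (Fin n)) (y : ∀ i, X i) :
    marg R S (restr S y) = ∑ z, if ∀ i ∈ S, z i = y i then R z else 0 := by
  simp only [marg, restr, funext_iff, Subtype.forall]

lemma marg_restr_pos {R : (∀ i, X i) → ℝ} (hR : ∀ z, 0 < R z) (S : Finset (Fin n))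
    (y : ∀ i, X i) : 0 < marg R S (restr S y) := by
  rw [marg_restr]
  refine Finset.sum_pos' (fun z _ => ?_) ⟨y, Finset.mem_univ y, by simp [hR y]⟩
  split_ifs
  exacts [(hR z).le, le_rfl]

lemma marg_univ (R : (∀ i, X i) → ℝ) (y : ∀ i, X i) : marg R univ (restr univ y) = R y := by
  simp [marg_restr, ← funext_iff]

lemma cpr_restr (R : (∀ i, X i) → ℝ) (i : Fin n) (T : Finset (Fin n)) (x : ∀ i, X i) :
    cpr R i T (x i) (restr T x)
      = marg R (insert i T) (restr (insert i T) x) / marg R T (restr T x) := by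
  simp only [cpr, marg_restr, restr, funext_iff, Subtype.forall, Finset.forall_mem_insert]

lemma marg_restr_eq_sum_update {j : Fin n} {S : Finset (Fin n)} (hj : j ∉ S)
    (R : (∀ i, X i) → ℝ) (y : ∀ i, X i) :
    marg R S (restr S y)
      = ∑ a, marg R (insert j S) (restr (insert j S) (Function.update y j a)) := by
  simp only [marg_restr, Finset.forall_mem_insert, Function.update_self]
  rw [Finset.sum_comm]
  refine Finset.sum_congr rfl fun z _ => ?_
  have hS : ∀ a, (∀ i ∈ S, z i = Function.update y j a i) ↔ ∀ i ∈ S, z i = y i :=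
    fun a => forall₂_congr fun i hi => by rw [Function.update_of_ne (ne_of_mem_of_not_mem hi hj)]
  simp only [hS]
  by_cases hz : ∀ i ∈ S, z i = y i
  · simp only [if_pos hz, and_iff_left hz, Finset.sum_ite_eq, Finset.mem_univ, if_true]
  · rw [if_neg hz, Finset.sum_eq_zero fun a _ => if_neg fun h => hz h.2]

/-- Each assignment on `S` is represented by the configuration that agrees with `x` off `S`. -/
lemma marg_restr_eq_sum_marg_of_subset {T S : Finset (Fin n)} (hTS : T ⊆ S)
    (R : (∀ i, X i) → ℝ) (x : ∀ i, X i) :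
    marg R T (restr T x)
      = ∑ y, if (∀ i ∈ T, y i = x i) ∧ ∀ i ∉ S, y i = x i
          then marg R S (restr S y) else 0 := by
  simp only [marg_restr, ← Finset.sum_filter]
  rw [Finset.sum_comm' (t' := univ.filter fun z => ∀ i ∈ T, z i = x i)
    (s' := fun z => {S.piecewise z x})]
  · refine Finset.sum_congr rfl fun z _ => by simp
  · intro y z
    simp only [Finset.mem_filter, Finset.mem_univ, true_and, Finset.mem_singleton, funext_iff,
      Finset.piecewise]
    constructor
    · rintro ⟨⟨hT, hS⟩, hzy⟩
      refine ⟨fun i => ?_, fun i hi => (hzy i (hTS hi)).trans (hT i hi)⟩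
      split_ifs with hi
      exacts [(hzy i hi).symm, hS i hi]
    · rintro ⟨hy, hT⟩
      refine ⟨⟨fun i hi => ?_, fun i hi => ?_⟩, fun i hi => ?_⟩
      · rw [hy i, if_pos (hTS hi)]; exact hT i hi
      · rw [hy i, if_neg hi]
      · rw [hy i, if_pos hi]

lemma marg_insert_mul_eq_mul_marg {T S : Finset (Fin n)} {j : Fin n} (hTS : T ⊆ S) (hj : j ∉ S)
    (R : (∀ i, X i) → ℝ) (x : ∀ i, X i) (a b : ℝ)
    (h : ∀ y, (∀ i ∈ insert j T, y i = x i) →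
      marg R (insert j S) (restr (insert j S) y) * a = b * marg R S (restr S y)) :
    marg R (insert j T) (restr (insert j T) x) * a = b * marg R T (restr T x) := by
  rw [marg_restr_eq_sum_marg_of_subset (Finset.insert_subset_insert j hTS),
    marg_restr_eq_sum_marg_of_subset hTS, Finset.sum_mul, Finset.mul_sum]
  refine Finset.sum_congr rfl fun y _ => ?_
  have hcond : ((∀ i ∈ insert j T, y i = x i) ∧ ∀ i ∉ insert j S, y i = x i) ↔
      ((∀ i ∈ T, y i = x i) ∧ ∀ i ∉ S, y i = x i) := by
    simp only [Finset.forall_mem_insert]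
    simp only [Finset.mem_insert, not_or]
    constructor
    · rintro ⟨⟨hjx, hT⟩, hS⟩
      exact ⟨hT, fun i hi => if hij : i = j then hij ▸ hjx else hS i ⟨hij, hi⟩⟩
    · rintro ⟨hT, hS⟩
      exact ⟨⟨hS j hj, hT⟩, fun i hi => hS i hi.2⟩
  by_cases hy : (∀ i ∈ T, y i = x i) ∧ ∀ i ∉ S, y i = x i
  · rw [if_pos (hcond.2 hy), if_pos hy]
    exact h y (hcond.2 hy).1
  · rw [if_neg (mt hcond.1 hy), if_neg hy, zero_mul, mul_zero]

end Marginal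

section StructuralModel

variable {E : Type} {X : Fin n → Type} {U : E → Type}
  (pa : Fin n → Finset (Fin n)) (c : Fin n → E)
  (f : ∀ i, U (c i) → (∀ j : pa i, X j) → X i) (q : ∀ e, U e → ℝ)

noncomputable def eqIndicator (i : Fin n) (u : U (c i)) (y : ∀ i, X i) : ℝ :=
  if f i u (restr (pa i) y) = y i then 1 else 0

variable {pa c f} in
lemma eqIndicator_congr {i : Fin n} (u : U (c i)) {x y : ∀ i, X i}
    (h : ∀ j ∈ insert i (pa i), y j = x j) :
    eqIndicator pa c f i u y = eqIndicator pa c f i u x := by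
  rw [Finset.forall_mem_insert] at h
  have hpa : restr (pa i) y = restr (pa i) x := funext fun j => h.2 j j.2
  rw [eqIndicator, eqIndicator, hpa, h.1]

variable {pa c f} in
lemma sum_eqIndicator_update [∀ i, Fintype (X i)] {i : Fin n} (hi : i ∉ pa i) (u : U (c i))
    (y : ∀ i, X i) :
    ∑ a, eqIndicator pa c f i u (Function.update y i a) = 1 := by
  have hpa : ∀ a, restr (pa i) (Function.update y i a) = restr (pa i) y := fun a =>
    funext fun j => Function.update_of_ne (ne_of_mem_of_not_mem j.2 hi) _ _
  simp only [eqIndicator, hpa, Function.update_self, Finset.sum_ite_eq, Finset.mem_univ, if_true]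

def prefixSet (m : ℕ) : Finset (Fin n) := univ.filter fun i => i.val < m

@[simp]
lemma mem_prefixSet {i : Fin n} {m : ℕ} : i ∈ prefixSet m ↔ i.val < m := by
  simp [prefixSet]

lemma prefixSet_succ_val (i : Fin n) : prefixSet (i.val + 1) = insert i (prefixSet i.val) := by
  ext j
  simp only [mem_prefixSet, Finset.mem_insert, Fin.ext_iff]
  omega

lemma notMem_prefixSet_val (i : Fin n) : i ∉ prefixSet i.val := by
  simp

lemma prefixSet_self : prefixSet (n := n) n = univ := by
  ext i
  simp [i.isLt]

noncomputable def prefixWeight [Fintype E] [∀ e, Fintype (U e)] (m : ℕ) (y : ∀ i, X i) :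
    ℝ :=
  ∑ u : ∀ e, U e, (∏ e, q e (u e)) * ∏ i ∈ prefixSet m, eqIndicator pa c f i (u (c i)) y

lemma prefixWeight_self [Fintype E] [∀ i, Fintype (X i)] [∀ e, Fintype (U e)] (y : ∀ i, X i) :
    prefixWeight pa c f q n y = Qfun pa c f q y := by
  rw [prefixWeight, prefixSet_self]
  rfl

variable {pa} in
lemma sum_prefixWeight_update [Fintype E] [∀ i, Fintype (X i)] [∀ e, Fintype (U e)]
    (hpa : ∀ i, ∀ j ∈ pa i, j < i) (j : Fin n) (y : ∀ i, X i) :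
    ∑ a, prefixWeight pa c f q (j.val + 1) (Function.update y j a)
      = prefixWeight pa c f q j.val y := by
  have hrest : ∀ (u : ∀ e, U e) a, ∀ i ∈ prefixSet j.val,
      eqIndicator pa c f i (u (c i)) (Function.update y j a)
        = eqIndicator pa c f i (u (c i)) y := by
    refine fun u a i hi => eqIndicator_congr _ fun k hk => Function.update_of_ne ?_ _ _
    rintro rfl
    rw [mem_prefixSet] at hi
    rcases Finset.mem_insert.1 hk with rfl | hk
    · exact lt_irrefl _ hi
    · exact lt_asymm hi (hpa i k hk)
  simp only [prefixWeight, prefixSet_succ_val, Finset.prod_insert (notMem_prefixSet_val j)]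
  rw [Finset.sum_comm]
  refine Finset.sum_congr rfl fun u _ => ?_
  simp only [Finset.prod_congr rfl (hrest u _), mul_left_comm _ (eqIndicator pa c f j _ _),
    ← Finset.sum_mul, sum_eqIndicator_update (fun h => lt_irrefl j (hpa j j h)),
    one_mul]

variable {pa} in
lemma marg_prefixSet [Fintype E] [∀ i, Fintype (X i)] [∀ e, Fintype (U e)]
    (hpa : ∀ i, ∀ j ∈ pa i, j < i) {m : ℕ} (hm : m ≤ n) (y : ∀ i, X i) :
    marg (Qfun pa c f q) (prefixSet m) (restr (prefixSet m) y) = prefixWeight pa c f q m y := by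
  refine Nat.decreasingInduction (motive := fun m _ => ∀ y : ∀ i, X i,
    marg (Qfun pa c f q) (prefixSet m) (restr (prefixSet m) y) = prefixWeight pa c f q m y)
    (fun m hm ih y => ?_) (fun y => ?_) hm y
  · have hsucc : prefixSet (m + 1) = insert ⟨m, hm⟩ (prefixSet m) :=
      prefixSet_succ_val ⟨m, hm⟩
    rw [marg_restr_eq_sum_update (notMem_prefixSet_val ⟨m, hm⟩), ← hsucc]
    simp only [ih]
    exact sum_prefixWeight_update c f q hpa ⟨m, hm⟩ y
  · rw [prefixSet_self, marg_univ, prefixWeight_self]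

end StructuralModel

section Children

variable {E : Type} [Fintype E] (c : Fin n → E)

lemma ch_strictMono (e : E) : StrictMono (ch c e) :=
  ((childSet c e).orderEmbOfFin rfl).strictMono

lemma exists_ch_eq {e : E} {i : Fin n} (h : c i = e) : ∃ l, ch c e l = i := by
  have hi : i ∈ Set.range ((childSet c e).orderEmbOfFin rfl) := by
    rw [Finset.range_orderEmbOfFin]
    simpa [childSet] using h
  exact hi

lemma uCast_apply {U : E → Type} (u : ∀ e, U e) (e : E) (l : Fin (childSet c e).card) :
    uCast U c e l (u e) = u (c (ch c e l)) := by
  have key : ∀ {a b : E} (h : a = b), cast (congrArg U h) (u a) = u b := by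
    rintro a b rfl
    rfl
  exact key (c_ch c e l).symm

lemma prod_filter_ch_mem {M : Type*} [CommMonoid M] (g : Fin n → M) (s : Finset (Fin n)) :
    ∏ e, ∏ l ∈ univ.filter (fun l => ch c e l ∈ s), g (ch c e l) = ∏ i ∈ s, g i := by
  rw [← Finset.prod_fiberwise s c g]
  refine Finset.prod_congr rfl fun e _ => Finset.prod_nbij (ch c e) (fun l hl => ?_)
    (ch_strictMono c e).injective.injOn (fun i hi => ?_) fun _ _ => rfl
  · simpa [c_ch] using hl
  · simp only [Finset.coe_filter, Set.mem_ofPred_eq] at hi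
    obtain ⟨l, rfl⟩ := exists_ch_eq c hi.2
    exact ⟨l, by simpa using hi.1, rfl⟩

lemma ch_mem_prefixSet_ch_iff {e : E} {k l : Fin (childSet c e).card} :
    ch c e l ∈ prefixSet (ch c e k).val ↔ l < k := by
  rw [mem_prefixSet, ← Fin.lt_def, (ch_strictMono c e).lt_iff_lt]

lemma ch_mem_prefixSet_ch_succ_iff {e : E} {k l : Fin (childSet c e).card} :
    ch c e l ∈ prefixSet ((ch c e k).val + 1) ↔ l ≤ k := by
  rw [mem_prefixSet, Nat.lt_succ_iff, ← Fin.le_def, (ch_strictMono c e).le_iff_le]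

lemma ch_mem_prefixSet_ch_succ_iff_of_ne {e e' : E} (he : e' ≠ e) (k : Fin (childSet c e).card)
    (l : Fin (childSet c e').card) :
    ch c e' l ∈ prefixSet ((ch c e k).val + 1) ↔ ch c e' l ∈ prefixSet (ch c e k).val := by
  rw [prefixSet_succ_val, Finset.mem_insert, or_iff_right]
  intro h
  exact he (by rw [← c_ch c e' l, h, c_ch c e k])

end Children

section ChildMixture

variable {E : Type} [Fintype E] {X : Fin n → Type} {U : E → Type} [∀ e, Fintype (U e)]
  (pa : Fin n → Finset (Fin n)) (c : Fin n → E)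
  (f : ∀ i, U (c i) → (∀ j : pa i, X j) → X i) (q : ∀ e, U e → ℝ)

noncomputable def childMixture (e : E) (K : Finset (Fin (childSet c e).card)) (y : ∀ i, X i) :
    ℝ :=
  ∑ u : U e, q e u * ∏ l ∈ K, eqIndicator pa c f (ch c e l) (uCast U c e l u) y

noncomputable def partialMixture (e : E) (k : ℕ) (y : ∀ i, X i) : ℝ :=
  childMixture pa c f q e (univ.filter fun l => l.val < k) y

lemma prefixWeight_eq_prod_childMixture (m : ℕ) (y : ∀ i, X i) :
    prefixWeight pa c f q m y
      = ∏ e, childMixture pa c f q e (univ.filter fun l => ch c e l ∈ prefixSet m) y := by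
  simp only [childMixture, Fintype.prod_sum, Finset.prod_mul_distrib, uCast_apply]
  exact Finset.sum_congr rfl fun u _ => congrArg _
    (prod_filter_ch_mem c (fun i => eqIndicator pa c f i (u (c i)) y) (prefixSet m)).symm

lemma filter_ch_mem_prefixSet_ch (e : E) (k : Fin (childSet c e).card) :
    (univ.filter fun l => ch c e l ∈ prefixSet (ch c e k).val)
      = univ.filter fun l => l.val < k.val :=
  Finset.filter_congr fun _ _ => (ch_mem_prefixSet_ch_iff c).trans Fin.lt_def

lemma filter_ch_mem_prefixSet_ch_succ (e : E) (k : Fin (childSet c e).card) :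
    (univ.filter fun l => ch c e l ∈ prefixSet ((ch c e k).val + 1))
      = univ.filter fun l => l.val < k.val + 1 :=
  Finset.filter_congr fun _ _ =>
    (ch_mem_prefixSet_ch_succ_iff c).trans (Fin.le_def.trans Nat.lt_succ_iff.symm)

/-- Passing the `k`-th child of `e` changes only the factor of `e`. -/
lemma prefixWeight_ch_succ_mul (e : E) (k : Fin (childSet c e).card) (y : ∀ i, X i) :
    prefixWeight pa c f q ((ch c e k).val + 1) y * partialMixture pa c f q e k y
      = partialMixture pa c f q e (k + 1) y * prefixWeight pa c f q (ch c e k).val y := by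
  have hother : ∀ e' ∈ univ.erase e,
      childMixture pa c f q e' (univ.filter fun l => ch c e' l ∈ prefixSet ((ch c e k).val + 1)) y
        = childMixture pa c f q e'
            (univ.filter fun l => ch c e' l ∈ prefixSet (ch c e k).val) y :=
    fun e' he' => by
      rw [Finset.filter_congr fun l _ =>
        ch_mem_prefixSet_ch_succ_iff_of_ne c (Finset.ne_of_mem_erase he') k l]
  simp only [prefixWeight_eq_prod_childMixture,
    ← Finset.mul_prod_erase univ _ (Finset.mem_univ e), Finset.prod_congr rfl hother,
    filter_ch_mem_prefixSet_ch, filter_ch_mem_prefixSet_ch_succ,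
    partialMixture]
  ring

variable {pa c f} in
lemma childMixture_congr (e : E) (K : Finset (Fin (childSet c e).card)) {x y : ∀ i, X i}
    (h : ∀ l ∈ K, ∀ j ∈ insert (ch c e l) (pa (ch c e l)), y j = x j) :
    childMixture pa c f q e K y = childMixture pa c f q e K x :=
  Finset.sum_congr rfl fun _ _ => congrArg _ <|
    Finset.prod_congr rfl fun l hl => eqIndicator_congr _ (h l hl)

lemma partialMixture_zero (hq1 : ∀ e, ∑ u, q e u = 1) (e : E) (y : ∀ i, X i) :
    partialMixture pa c f q e 0 y = 1 := by
  simp [partialMixture, childMixture, hq1]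

end ChildMixture

section ChainRule

variable {E : Type} [Fintype E] {X : Fin n → Type} {U : E → Type}
  [∀ i, Fintype (X i)] [∀ e, Fintype (U e)]
  {pa : Fin n → Finset (Fin n)} (c : Fin n → E)
  (f : ∀ i, U (c i) → (∀ j : pa i, X j) → X i) (q : ∀ e, U e → ℝ)

lemma Tset_subset_prefixSet (hpa : ∀ i, ∀ j ∈ pa i, j < i) (e : E)
    (k : Fin (childSet c e).card) : Tset pa c e k ⊆ prefixSet (ch c e k).val := by
  intro j hj
  simp only [Tset, Finset.mem_union, Finset.mem_image, Finset.mem_biUnion, Finset.mem_filter,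
    Finset.mem_univ, true_and] at hj
  rcases hj with ⟨l, hl, rfl⟩ | ⟨l, hl, hj⟩
  · exact (ch_mem_prefixSet_ch_iff c).2 hl
  · exact mem_prefixSet.2 (lt_of_lt_of_le (hpa _ j hj) ((ch_strictMono c e).monotone hl))

lemma insert_ch_subset_insert_ch_Tset (e : E) {k l : Fin (childSet c e).card} (hl : l ≤ k) :
    insert (ch c e l) (pa (ch c e l)) ⊆ insert (ch c e k) (Tset pa c e k) := by
  refine Finset.insert_subset ?_ fun j hj => Finset.mem_insert_of_mem <|
    Finset.mem_union_right _ <| Finset.mem_biUnion.2 ⟨l, by simpa using hl, hj⟩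
  rcases hl.lt_or_eq with hl | rfl
  · exact Finset.mem_insert_of_mem <| Finset.mem_union_left _ <|
      Finset.mem_image.2 ⟨l, by simpa using hl, rfl⟩
  · exact Finset.mem_insert_self _ _

lemma marg_insert_ch_Tset_mul (hpa : ∀ i, ∀ j ∈ pa i, j < i) (e : E)
    (k : Fin (childSet c e).card) (x : ∀ i, X i) :
    marg (Qfun pa c f q) (insert (ch c e k) (Tset pa c e k))
        (restr (insert (ch c e k) (Tset pa c e k)) x) * partialMixture pa c f q e k x
      = partialMixture pa c f q e (k + 1) x
          * marg (Qfun pa c f q) (Tset pa c e k) (restr (Tset pa c e k) x) := by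
  refine marg_insert_mul_eq_mul_marg (Tset_subset_prefixSet c hpa e k)
    (notMem_prefixSet_val _) _ x _ _ fun y hy => ?_
  have hP : ∀ k' ≤ k.val + 1, partialMixture pa c f q e k' y = partialMixture pa c f q e k' x :=
    fun k' hk' => childMixture_congr q e _ fun l hl j hj =>
      hy j (insert_ch_subset_insert_ch_Tset c e (Fin.le_def.2 (by simp at hl; omega)) hj)
  have hlt : (ch c e k).val < n := (ch c e k).isLt
  rw [← prefixSet_succ_val, marg_prefixSet c f q hpa hlt, marg_prefixSet c f q hpa hlt.le,
    ← hP _ le_rfl, ← hP _ k.val.le_succ]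
  exact prefixWeight_ch_succ_mul pa c f q e k y

lemma partialMixture_ne_zero (hpa : ∀ i, ∀ j ∈ pa i, j < i)
    (hQpos : ∀ x, 0 < Qfun pa c f q x) (e : E) (k : Fin (childSet c e).card) (x : ∀ i, X i) :
    partialMixture pa c f q e k x ≠ 0 := by
  have h := (marg_restr_pos hQpos (prefixSet (ch c e k).val) x).ne'
  rw [marg_prefixSet c f q hpa (ch c e k).isLt.le, prefixWeight_eq_prod_childMixture,
    Finset.prod_ne_zero_iff] at h
  simpa only [filter_ch_mem_prefixSet_ch, partialMixture] using h e (Finset.mem_univ e)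

lemma cpr_ch_Tset_eq_div (hpa : ∀ i, ∀ j ∈ pa i, j < i) (hQpos : ∀ x, 0 < Qfun pa c f q x)
    (e : E) (k : Fin (childSet c e).card) (x : ∀ i, X i) :
    cpr (Qfun pa c f q) (ch c e k) (Tset pa c e k) (x (ch c e k)) (restr (Tset pa c e k) x)
      = partialMixture pa c f q e (k + 1) x / partialMixture pa c f q e k x := by
  rw [cpr_restr, div_eq_div_iff (marg_restr_pos hQpos _ x).ne'
    (partialMixture_ne_zero c f q hpa hQpos e k x)]
  exact marg_insert_ch_Tset_mul c f q hpa e k x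

end ChainRule

theorem mixture_eq_chain_rule_product_general
    {E : Type} [Fintype E] (X : Fin n → Type) (U : E → Type)
    [∀ i, Fintype (X i)] [∀ i, Nonempty (X i)]
    [∀ e, Fintype (U e)]
    (pa : Fin n → Finset (Fin n)) (hpa : ∀ i, ∀ j ∈ pa i, j < i)
    (c : Fin n → E)
    (f : ∀ i, U (c i) → (∀ j : pa i, X j) → X i)
    (q : ∀ e, U e → ℝ) (hq1 : ∀ e, ∑ u, q e u = 1)
    (hQpos : ∀ x, 0 < Qfun pa c f q x)
    (e : E) (v : ∀ j : Wset pa c e, X j) :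
    (∑ u : U e, q e u * ∏ k : Fin (childSet c e).card,
        (if f (ch c e k) (uCast U c e k u) (restr2 (pa_subset_W pa c e k) v)
            = v ⟨ch c e k, ch_mem_W pa c e k⟩ then (1 : ℝ) else 0))
      = ∏ k : Fin (childSet c e).card,
          cpr (Qfun pa c f q) (ch c e k) (Tset pa c e k)
            (v ⟨ch c e k, ch_mem_W pa c e k⟩)
            (restr2 (T_subset_W pa c e k) v) := by
  obtain ⟨x, rfl⟩ := restr_surjective (X := X) (Wset pa c e) v
  set P : ℕ → ℝ := fun k => partialMixture pa c f q e k x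
  calc _ = childMixture pa c f q e univ x := rfl
    _ = P (childSet c e).card := congrArg (childMixture pa c f q e · x)
      (Finset.filter_true_of_mem fun l _ => l.isLt).symm
    _ = P 0 * ∏ k ∈ Finset.range (childSet c e).card, P (k + 1) / P k :=
      (mul_prod_range_div_eq P _ fun k hk =>
        partialMixture_ne_zero c f q hpa hQpos e ⟨k, hk⟩ x).symm
    _ = ∏ k : Fin (childSet c e).card, P (k + 1) / P k := by
      rw [show P 0 = 1 from partialMixture_zero pa c f q hq1 e x, one_mul,
        Fin.prod_univ_eq_prod_range (fun k => P (k + 1) / P k)]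
    _ = _ := Finset.prod_congr rfl fun k _ => (cpr_ch_Tset_eq_div c f q hpa hQpos e k x).symm

/-- in a quasi-Markovian PSCM with strictly positive induced distribution,
the mixture over an exogenous variable of the product of its children's structural-equation
CPTs equals the chain-rule product of conditionals of the induced endogenous distribution. -/
theorem mixture_eq_chain_rule_product
    {E : Type} [Fintype E] (X : Fin n → Type) (U : E → Type)
    [∀ i, Fintype (X i)] [∀ i, Nonempty (X i)]
    [∀ e, Fintype (U e)] [∀ e, Nonempty (U e)]
    (pa : Fin n → Finset (Fin n)) (hpa : ∀ i, ∀ j ∈ pa i, j < i)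
    (c : Fin n → E)
    (f : ∀ i, U (c i) → (∀ j : pa i, X j) → X i)
    (q : ∀ e, U e → ℝ) (hq0 : ∀ e u, 0 ≤ q e u) (hq1 : ∀ e, ∑ u, q e u = 1)
    (hQpos : ∀ x, 0 < Qfun pa c f q x)
    (e : E) (v : ∀ j : Wset pa c e, X j) :
    (∑ u : U e, q e u * ∏ k : Fin (childSet c e).card,
        (if f (ch c e k) (uCast U c e k u) (restr2 (pa_subset_W pa c e k) v)
            = v ⟨ch c e k, ch_mem_W pa c e k⟩ then (1 : ℝ) else 0))
      = ∏ k : Fin (childSet c e).card,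
          cpr (Qfun pa c f q) (ch c e k) (Tset pa c e k)
            (v ⟨ch c e k, ch_mem_W pa c e k⟩)
            (restr2 (T_subset_W pa c e k) v) :=
  mixture_eq_chain_rule_product_general X U pa hpa c f q hq1 hQpos e v
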